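/- Kantorovich duality implication: for distinct x, y ∈ V and ε ∈ (0,1], κ_ε(x,y)/ε = inf over 1-Lipschitz functions f of [(1/ε)(1 − ∇_{xy}f) + ∇_{xy}ℒf], where ∇_{xy}f := (f(y)−f(x))/d(x,y). -/
import Mathlib


open Finset Filter Topology MeasureTheory
open scoped Classical

noncomputable section

variable {V : Type*}

/-- Vertex weight `μ(x) = Σ_y μ_{xy}`. -/
def vdeg [Fintype V] (μ : V → V → ℝ) (x : V) : ℝ := ∑ y, μ x y

/-- Transition probability kernel `P(x,y) = μ_{xy}/μ(x)`. -/
def transP [Fintype V] (μ : V → V → ℝ) (x y : V) : ℝ := μ x y / vdeg μ x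

/-- `m` is the Perron measure of `(V,μ)`. -/
def IsPerron [Fintype V] (μ : V → V → ℝ) (m : V → ℝ) : Prop :=
  (∀ x, 0 < m x) ∧ (∑ x, m x = 1) ∧ ∀ x, m x = ∑ y, m y * transP μ y x

/-- Mean transition probability kernel `𝒫 = (P + ←P)/2`. -/
def meanK [Fintype V] (μ : V → V → ℝ) (m : V → ℝ) (x y : V) : ℝ :=
  (transP μ x y + m y / m x * transP μ y x) / 2

/-- There is a directed path of length `n` from `x` to `y`. -/
def HasPathLen (μ : V → V → ℝ) (x y : V) (n : ℕ) : Prop :=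
  ∃ c : ℕ → V, c 0 = x ∧ c n = y ∧ ∀ i < n, 0 < μ (c i) (c (i + 1))

/-- The (non-symmetric) graph distance. -/
def gdist (μ : V → V → ℝ) (x y : V) : ℝ :=
  sInf {r : ℝ | ∃ n : ℕ, (r : ℝ) = (n : ℝ) ∧ HasPathLen μ x y n}

/-- The graph is simple: no loops. -/
def IsSimpleW (μ : V → V → ℝ) : Prop := ∀ x, μ x x = 0

/-- The edge weight is nonnegative. -/
def Nonneg (μ : V → V → ℝ) : Prop := ∀ x y, 0 ≤ μ x y

/-- The graph is strongly connected. -/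
def StronglyConnectedW (μ : V → V → ℝ) : Prop := ∀ x y, ∃ n, HasPathLen μ x y n

/-- `π` is a coupling of the probability measures `ν₀, ν₁`. -/
def IsCoupling [Fintype V] (π : V → V → ℝ) (ν₀ ν₁ : V → ℝ) : Prop :=
  (∀ x y, 0 ≤ π x y) ∧ (∀ x, ∑ y, π x y = ν₀ x) ∧ (∀ y, ∑ x, π x y = ν₁ y)

/-- The L¹-Wasserstein distance with cost `d`. -/
def Wass [Fintype V] (d : V → V → ℝ) (ν₀ ν₁ : V → ℝ) : ℝ :=
  sInf {c : ℝ | ∃ π, IsCoupling π ν₀ ν₁ ∧ c = ∑ x, ∑ y, d x y * π x y}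

/-- The probability measure `ν^ε_x`. -/
def nu [Fintype V] (P : V → V → ℝ) (ε : ℝ) (x z : V) : ℝ :=
  if z = x then 1 - ε else ε * P x z

/-- `κ_ε(x,y) = 1 − W(ν^ε_x, ν^ε_y)/d(x,y)`. -/
def kappaEps [Fintype V] (μ : V → V → ℝ) (m : V → ℝ) (ε : ℝ) (x y : V) : ℝ :=
  1 - Wass (gdist μ) (nu (meanK μ m) ε x) (nu (meanK μ m) ε y) / gdist μ x y

/-- The (positive) Chung Laplacian associated with a kernel `P`. -/
def chungL [Fintype V] (P : V → V → ℝ) (f : V → ℝ) (x : V) : ℝ :=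
  f x - ∑ y, P x y * f y

/-- The negative Laplacian `Δ = −ℒ`. -/
def negL [Fintype V] (P : V → V → ℝ) (f : V → ℝ) (x : V) : ℝ :=
  (∑ y, P x y * f y) - f x

/-- `f` is 1-Lipschitz with respect to the non-symmetric distance `d`. -/
def Lip1 (d : V → V → ℝ) (f : V → ℝ) : Prop := ∀ x y, f y - f x ≤ d x y

/-- The asymptotic mean curvature `ℋ_x = ℒρ_x(x)`. -/
def Hout [Fintype V] (μ : V → V → ℝ) (m : V → ℝ) (x : V) : ℝ :=
  chungL (meanK μ m) (fun y => gdist μ x y) x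

/-- The reverse asymptotic mean curvature `←ℋ_x = ℒ←ρ_x(x)`. -/
def Hin [Fintype V] (μ : V → V → ℝ) (m : V → ℝ) (x : V) : ℝ :=
  chungL (meanK μ m) (fun y => gdist μ y x) x

/-- The mixed asymptotic mean curvature `ℋ(x,y) = −(ℋ_x + ←ℋ_y)`. -/
def Hmix [Fintype V] (μ : V → V → ℝ) (m : V → ℝ) (x y : V) : ℝ :=
  -(Hout μ m x + Hin μ m y)

/-- The neighborhood `𝒩_x = N_x ∪ ←N_x`. -/
def nbr [Fintype V] (μ : V → V → ℝ) (x : V) : Finset V :=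
  Finset.univ.filter (fun y => 0 < μ x y ∨ 0 < μ y x)

namespace KappaAux

lemma gdist_nonneg (μ : V → V → ℝ) (u v : V) : 0 ≤ gdist μ u v := by
  apply Real.sInf_nonneg
  rintro r ⟨n, rfl, -⟩
  positivity

lemma one_le_gdist (μ : V → V → ℝ) (hconn : StronglyConnectedW μ) {u v : V} (huv : u ≠ v) :
    1 ≤ gdist μ u v := by
  apply le_csInf
  · obtain ⟨n, hp⟩ := hconn u v
    exact ⟨n, n, rfl, hp⟩
  · rintro r ⟨n, rfl, c, h0, hn, -⟩
    have hn0 : n ≠ 0 := by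
      rintro rfl
      exact huv (h0 ▸ hn ▸ rfl)
    exact_mod_cast Nat.one_le_iff_ne_zero.mpr hn0

lemma vdeg_pos [Fintype V] (μ : V → V → ℝ) (hnn : Nonneg μ)
    (hconn : StronglyConnectedW μ) {x y : V} (hxy : x ≠ y) (v : V) :
    0 < vdeg μ v := by
  have hw : ∃ w, w ≠ v := by
    by_cases h : v = x
    · exact ⟨y, by rw [h]; exact fun hc => hxy hc.symm⟩
    · exact ⟨x, fun hc => h hc.symm⟩
  obtain ⟨w, hwv⟩ := hw
  obtain ⟨n, c, h0, hn, hs⟩ := hconn v w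
  have hn0 : n ≠ 0 := by rintro rfl; exact hwv (h0 ▸ hn ▸ rfl)
  have h1 : 0 < μ v (c 1) := by
    have := hs 0 (Nat.pos_of_ne_zero hn0)
    rwa [h0] at this
  have hle : μ v (c 1) ≤ vdeg μ v :=
    Finset.single_le_sum (fun i _ => hnn v i) (Finset.mem_univ (c 1))
  linarith

lemma transP_nonneg [Fintype V] {μ : V → V → ℝ} (hnn : Nonneg μ)
    {v : V} (hv : 0 < vdeg μ v) (z : V) : 0 ≤ transP μ v z :=
  div_nonneg (hnn v z) hv.le

lemma transP_row_sum [Fintype V] {μ : V → V → ℝ} {v : V} (hv : 0 < vdeg μ v) :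
    ∑ z, transP μ v z = 1 := by
  unfold transP
  rw [← Finset.sum_div]
  exact div_self hv.ne'

lemma meanK_nonneg [Fintype V] {μ : V → V → ℝ} {m : V → ℝ} (hnn : Nonneg μ)
    (hmpos : ∀ v, 0 < m v) (hv : ∀ v, 0 < vdeg μ v) (v z : V) :
    0 ≤ meanK μ m v z := by
  unfold meanK
  have h1 := transP_nonneg hnn (hv v) z
  have h2 := transP_nonneg hnn (hv z) v
  have h3 : 0 ≤ m z / m v := le_of_lt (div_pos (hmpos z) (hmpos v))
  positivity

lemma meanK_row_sum [Fintype V] {μ : V → V → ℝ} {m : V → ℝ}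
    (hm : IsPerron μ m) (hv : ∀ v, 0 < vdeg μ v) (v : V) :
    ∑ z, meanK μ m v z = 1 := by
  unfold meanK
  rw [← Finset.sum_div, Finset.sum_add_distrib, transP_row_sum (hv v)]
  have : ∑ z, m z / m v * transP μ z v = (∑ z, m z * transP μ z v) / m v := by
    rw [Finset.sum_div]
    exact Finset.sum_congr rfl fun z _ => by rw [div_mul_eq_mul_div]
  rw [this, ← hm.2.2 v, div_self (hm.1 v).ne']
  norm_num

lemma meanK_diag [Fintype V] {μ : V → V → ℝ} (m : V → ℝ) (hs : IsSimpleW μ) (v : V) :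
    meanK μ m v v = 0 := by
  simp [meanK, transP, hs v]

lemma nu_eq [Fintype V] {P : V → V → ℝ} {v : V} (hP : P v v = 0) (ε : ℝ) (z : V) :
    nu P ε v z = (if z = v then (1:ℝ) - ε else 0) + ε * P v z := by
  unfold nu
  split_ifs with h
  · subst h; rw [hP]; ring
  · ring

lemma nu_nonneg [Fintype V] {P : V → V → ℝ} (hP : ∀ z, 0 ≤ P v z) {ε : ℝ}
    (hε : ε ∈ Set.Ioc (0:ℝ) 1) (z : V) : 0 ≤ nu P ε v z := by
  unfold nu
  split_ifs
  · linarith [hε.2]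
  · exact mul_nonneg hε.1.le (hP z)

lemma nu_sum [Fintype V] {P : V → V → ℝ} {v : V} (hP : P v v = 0)
    (hsum : ∑ z, P v z = 1) (ε : ℝ) : ∑ z, nu P ε v z = 1 := by
  simp only [nu_eq hP]
  rw [Finset.sum_add_distrib, Finset.sum_ite_eq' Finset.univ v, ← Finset.mul_sum, hsum]
  simp

lemma sum_mul_nu [Fintype V] {P : V → V → ℝ} {v : V} (hP : P v v = 0)
    (ε : ℝ) (f : V → ℝ) :
    ∑ z, f z * nu P ε v z = f v - ε * chungL P f v := by
  simp only [nu_eq hP, mul_add]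
  rw [Finset.sum_add_distrib]
  have h1 : ∑ z, f z * (if z = v then (1:ℝ) - ε else 0)
      = ∑ z, (if z = v then ((1:ℝ) - ε) * f z else 0) := by
    refine Finset.sum_congr rfl fun z _ => ?_
    split_ifs <;> ring
  rw [h1, Finset.sum_ite_eq' Finset.univ v]
  have h2 : ∑ z, f z * (ε * P v z) = ε * ∑ z, P v z * f z := by
    rw [Finset.mul_sum]
    exact Finset.sum_congr rfl fun z _ => by ring
  rw [h2]
  simp only [Finset.mem_univ, if_true, chungL]
  ring

lemma sInf_image_affine {S : Set ℝ} (hne : S.Nonempty) (hbdd : BddAbove S)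
    {a c : ℝ} (hc : 0 < c) :
    sInf ((fun s => a - c * s) '' S) = a - c * sSup S := by
  have hglb : IsGLB ((fun s => a - c * s) '' S) (a - c * sSup S) := by
    constructor
    · rintro r ⟨s, hs, rfl⟩
      have := le_csSup hbdd hs
      show a - c * sSup S ≤ a - c * s
      nlinarith
    · intro b hb
      have h1 : ∀ s ∈ S, s ≤ (a - b) / c := by
        intro s hs
        have : b ≤ a - c * s := hb ⟨s, hs, rfl⟩
        rw [le_div_iff₀ hc]
        nlinarith
      have h2 := csSup_le hne h1
      rw [le_div_iff₀ hc] at h2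
      nlinarith
  exact hglb.csInf_eq (hne.image _)

end KappaAux

/-- Kantorovich duality implication for `κ_ε(x,y)/ε`. -/
theorem kappaEps_div_eq_inf_lip
    {V : Type*} [Fintype V] (μ : V → V → ℝ) (m : V → ℝ)
    (hnn : Nonneg μ) (hsimple : IsSimpleW μ) (hconn : StronglyConnectedW μ)
    (hm : IsPerron μ m)
    (hKR : ∀ ν₀ ν₁ : V → ℝ, (∀ z, 0 ≤ ν₀ z) → (∑ z, ν₀ z = 1) →
      (∀ z, 0 ≤ ν₁ z) → (∑ z, ν₁ z = 1) →
      Wass (gdist μ) ν₀ ν₁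
        = sSup {s : ℝ | ∃ f, Lip1 (gdist μ) f ∧ s = ∑ z, f z * (ν₁ z - ν₀ z)})
    (x y : V) (hxy : x ≠ y) (ε : ℝ) (hε : ε ∈ Set.Ioc (0:ℝ) 1) :
    kappaEps μ m ε x y / ε
      = sInf {r : ℝ | ∃ f, Lip1 (gdist μ) f ∧
          r = (1/ε) * (1 - (f y - f x) / gdist μ x y)
            + (chungL (meanK μ m) f y - chungL (meanK μ m) f x) / gdist μ x y} := by
  open KappaAux in
  set P := meanK μ m with hP
  set d := gdist μ x y with hdd
  have hvd : ∀ v, 0 < vdeg μ v := vdeg_pos μ hnn hconn hxy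
  have hd1 : 1 ≤ d := one_le_gdist μ hconn hxy
  have hd0 : 0 < d := lt_of_lt_of_le one_pos hd1
  have hε0 : (0:ℝ) < ε := hε.1
  have hPdiagx : P x x = 0 := meanK_diag m hsimple x
  have hPdiagy : P y y = 0 := meanK_diag m hsimple y
  have hProw : ∀ v, ∑ z, P v z = 1 := meanK_row_sum hm hvd
  have hPnn : ∀ v z, 0 ≤ P v z := meanK_nonneg hnn hm.1 hvd
  set ν₀ := nu P ε x with hν₀
  set ν₁ := nu P ε y with hν₁
  have hW : Wass (gdist μ) ν₀ ν₁
      = sSup {s : ℝ | ∃ f, Lip1 (gdist μ) f ∧ s = ∑ z, f z * (ν₁ z - ν₀ z)} :=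
    hKR ν₀ ν₁ (nu_nonneg (hPnn x) hε) (nu_sum hPdiagx (hProw x) ε)
      (nu_nonneg (hPnn y) hε) (nu_sum hPdiagy (hProw y) ε)
  set S := {s : ℝ | ∃ f, Lip1 (gdist μ) f ∧ s = ∑ z, f z * (ν₁ z - ν₀ z)} with hS
  -- value of the dual functional on a Lipschitz function
  have hval : ∀ f : V → ℝ, ∑ z, f z * (ν₁ z - ν₀ z)
      = (f y - f x) - ε * (chungL P f y - chungL P f x) := by
    intro f
    have : ∑ z, f z * (ν₁ z - ν₀ z) = (∑ z, f z * ν₁ z) - ∑ z, f z * ν₀ z := by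
      rw [← Finset.sum_sub_distrib]
      exact Finset.sum_congr rfl fun z _ => by ring
    rw [this, hν₀, hν₁, sum_mul_nu hPdiagy, sum_mul_nu hPdiagx]
    ring
  -- S is nonempty
  have hSne : S.Nonempty := by
    refine ⟨∑ z, (0:ℝ) * (ν₁ z - ν₀ z), fun _ => 0, fun u v => ?_, rfl⟩
    simpa using gdist_nonneg μ u v
  -- S is bounded above
  have hSbdd : BddAbove S := by
    set D := ∑ z, (gdist μ x z + gdist μ z x) with hD
    refine ⟨2 * D, ?_⟩
    rintro s ⟨f, hf, rfl⟩
    have hsum0 : ∑ z, ν₀ z = 1 := nu_sum hPdiagx (hProw x) ε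
    have hsum1 : ∑ z, ν₁ z = 1 := nu_sum hPdiagy (hProw y) ε
    have hDz : ∀ z, gdist μ x z ≤ D ∧ gdist μ z x ≤ D := by
      intro z
      have hone : gdist μ x z + gdist μ z x ≤ D :=
        Finset.single_le_sum
          (fun i _ => add_nonneg (gdist_nonneg μ x i) (gdist_nonneg μ i x))
          (Finset.mem_univ z)
      have h1 := gdist_nonneg μ x z
      have h2 := gdist_nonneg μ z x
      constructor <;> linarith
    have hub : ∀ z, f z - f x ≤ D := fun z => le_trans (hf x z) (hDz z).1
    have hlb : ∀ z, -D ≤ f z - f x := fun z => by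
      have := hf z x
      have := (hDz z).2
      linarith
    have hsplit : ∑ z, f z * (ν₁ z - ν₀ z)
        = (∑ z, (f z - f x) * ν₁ z) - ∑ z, (f z - f x) * ν₀ z := by
      rw [← Finset.sum_sub_distrib]
      have : (∑ z, f z * (ν₁ z - ν₀ z))
          = (∑ z, ((f z - f x) * ν₁ z - (f z - f x) * ν₀ z)) + f x * ((∑ z, ν₁ z) - ∑ z, ν₀ z) := by
        rw [mul_sub, Finset.mul_sum, Finset.mul_sum, ← Finset.sum_sub_distrib,
          ← Finset.sum_add_distrib]
        exact Finset.sum_congr rfl fun z _ => by ring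
      rw [this, hsum0, hsum1]
      ring
    have hA : ∑ z, (f z - f x) * ν₁ z ≤ D := by
      calc ∑ z, (f z - f x) * ν₁ z ≤ ∑ z, D * ν₁ z :=
            Finset.sum_le_sum fun z _ =>
              mul_le_mul_of_nonneg_right (hub z) (nu_nonneg (hPnn y) hε z)
        _ = D := by rw [← Finset.mul_sum, hsum1, mul_one]
      
    have hB : -D ≤ ∑ z, (f z - f x) * ν₀ z := by
      calc (-D : ℝ) = ∑ z, -D * ν₀ z := by rw [← Finset.mul_sum, hsum0, mul_one]
        _ ≤ ∑ z, (f z - f x) * ν₀ z :=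
            Finset.sum_le_sum fun z _ =>
              mul_le_mul_of_nonneg_right (hlb z) (nu_nonneg (hPnn x) hε z)
    rw [hsplit]
    linarith
  -- the target set is the image of S under an affine antitone map
  have hset : {r : ℝ | ∃ f, Lip1 (gdist μ) f ∧
        r = (1/ε) * (1 - (f y - f x) / d)
          + (chungL P f y - chungL P f x) / d}
      = (fun s => 1/ε - (1/(ε*d)) * s) '' S := by
    ext r
    constructor
    · rintro ⟨f, hf, rfl⟩
      refine ⟨∑ z, f z * (ν₁ z - ν₀ z), ⟨f, hf, rfl⟩, ?_⟩
      rw [hval f]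
      field_simp
      ring
    · rintro ⟨s, ⟨f, hf, rfl⟩, rfl⟩
      refine ⟨f, hf, ?_⟩
      rw [hval f]
      field_simp
      ring
  rw [hset, sInf_image_affine hSne hSbdd (by positivity),
    kappaEps, ← hdd, ← hν₀, ← hν₁, hW]
  rw [sub_div, div_div, one_div_mul_eq_div, mul_comm d ε]
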